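/- Let K = k(α) and K' = k(β) be Artin-Schreier extensions of a field k of characteristic p, with α^p − α = D and β^p − β = D'. Then K = K' if and only if there exist x ∈ F_p^* and B ∈ k with D' = xD + (B^p − B) (equivalently β = xα + B). -/

import Mathlib

/-!
The roots of `X^p - X - D` in a field of characteristic `p` containing one root `α` are exactly
the `α + i`, `i ∈ 𝔽_p`. The next-to-leading coefficient of a monic factor of degree `d` is then
`-(dα + i)` for some `i ∈ 𝔽_p`, so a proper factor would put `α` in `k`; hence `X^p - X - D` is
irreducible, `[k(α) : k] = p`, and some `σ ∈ Aut(k̄/k)` maps `α ↦ α + 1`.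

If `k(α) = k(β)`, then `σβ` is again a root of `X^p - X - D'`, so `σβ = β + c` with `c ∈ 𝔽_p` and
`γ = β - cα` is fixed by `σ`. As `[k(α) : k] = p` is prime, `k(γ)` is `k` or `k(α)`, and the latter
is impossible because `σ` moves `α`. So `β = cα + B` with `B ∈ k`, and applying `x ↦ x^p - x`
gives `D' = cD + (B^p - B)`, with `c ≠ 0` since `D'` is not of the form `y^p - y`. Conversely,
such a relation makes `cα + B` a root of `X^p - X - D'`, so `β = cα + B + i` with `i ∈ 𝔽_p`.
-/

section CharP

variable {p : ℕ} [Fact p.Prime] {L : Type*} [Field L] [CharP L p]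

theorem exists_natCast_eq_of_pow_eq_self {x : L} (hx : x ^ p = x) : ∃ n : ℕ, (n : L) = x := by
  have hx : x ∈ (ZMod.castHom (dvd_refl p) L).fieldRange := by
    rwa [ZMod.fieldRange_castHom_eq_bot, Subfield.mem_bot_iff_pow_eq_self L p]
  obtain ⟨i, rfl⟩ := hx
  exact ⟨i.val, by simp⟩

theorem exists_eq_add_natCast_of_pow_sub_self_eq {x y : L} (h : y ^ p - y = x ^ p - x) :
    ∃ n : ℕ, y = x + n := by
  obtain ⟨n, hn⟩ := exists_natCast_eq_of_pow_eq_self (p := p) (x := y - x)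
    (by rw [sub_pow_char]; linear_combination h)
  exact ⟨n, by rw [hn]; ring⟩

theorem natCast_pow_char (n : ℕ) : (n : L) ^ p = n := by
  rw [← frobenius_def]
  exact map_natCast _ n

theorem natCast_mul_add_algebraMap_pow_char_sub {k : Type*} [Field k] [Algebra k L] {D : k}
    {α : L} (hα : α ^ p - α = algebraMap k L D) (n : ℕ) (B : k) :
    (n * α + algebraMap k L B) ^ p - (n * α + algebraMap k L B) =
      algebraMap k L (n * D + (B ^ p - B)) := by
  rw [map_add, map_mul, map_natCast, map_sub, map_pow, ← hα, add_pow_char, mul_pow,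
    natCast_pow_char]
  ring

end CharP

section ArtinSchreierPolynomial

open Polynomial

variable {k : Type*} [Field k] {p : ℕ}

theorem natDegree_X_pow_sub_X_sub_C (hp : 1 < p) (a : k) : (X ^ p - X - C a).natDegree = p := by
  rw [natDegree_sub_C, FiniteField.X_pow_card_sub_X_natDegree_eq k hp]

theorem monic_X_pow_sub_X_sub_C (hp : 1 < p) (a : k) : (X ^ p - X - C a : k[X]).Monic := by
  rw [sub_sub]
  exact monic_X_pow_sub ((degree_add_le _ _).trans_lt (max_lt
    (by rw [degree_X]; exact_mod_cast hp)
    (degree_C_le.trans_lt (by exact_mod_cast zero_lt_one.trans hp))))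

end ArtinSchreierPolynomial

open Polynomial in
/-- `m.natDegree * x` is the sum `-m.nextCoeff` of the roots minus the sum of the `r - x`. -/
theorem natCast_natDegree_mul_mem_range {R L : Type*} [CommRing R] [CommRing L] [IsDomain L]
    [Algebra R L] {m : R[X]} (hm : m.Monic) (hsplit : (m.map (algebraMap R L)).Splits) {x : L}
    (hroots : ∀ r ∈ m.aroots L, r - x ∈ (algebraMap R L).range) :
    (m.natDegree : L) * x ∈ (algebraMap R L).range := by
  have hsum : (m.aroots L).sum = -algebraMap R L m.nextCoeff := by
    rw [← nextCoeff_map_eq_of_isUnit_leadingCoeff _ (by rw [hm.leadingCoeff]; exact isUnit_one),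
      hsplit.nextCoeff_eq_neg_sum_roots_of_monic (hm.map _), neg_neg]
  have hcard : (m.aroots L).card = m.natDegree := by
    rw [← hsplit.natDegree_eq_card_roots, hm.natDegree_map]
  have hshift : (m.natDegree : L) * x = (m.aroots L).sum - ((m.aroots L).map (· - x)).sum := by
    rw [Multiset.sum_map_sub, Multiset.map_const', Multiset.sum_replicate, hcard, nsmul_eq_mul,
      Multiset.map_id']
    ring
  rw [hshift, hsum]
  refine sub_mem (neg_mem ⟨_, rfl⟩) (multiset_sum_mem _ fun y hy => ?_)
  obtain ⟨r, hr, rfl⟩ := Multiset.mem_map.mp hy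
  exact hroots r hr

section AdjoinSimple

open IntermediateField Module

variable {k L : Type*} [Field k] [Field L] [Algebra k L]

theorem apply_eq_self_of_mem_adjoin_simple {σ : L ≃ₐ[k] L} {γ : L} (hγ : IsIntegral k γ)
    (hσγ : σ γ = γ) {x : L} (hx : x ∈ k⟮γ⟯) : σ x = x := by
  rw [← mem_toSubalgebra, adjoin_simple_toSubalgebra_of_isAlgebraic hγ.isAlgebraic] at hx
  exact AlgHom.adjoin_le_equalizer σ.toAlgHom (AlgHom.id k L)
    (Set.eqOn_singleton.mpr hσγ) hx

/-- A field of prime degree over `k` has no intermediate fields other than `k` and itself. -/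
theorem mem_bot_of_apply_eq_self {K : IntermediateField k L} (hK : (finrank k K).Prime)
    {σ : L ≃ₐ[k] L} {x : L} (hxK : x ∈ K) (hσx : σ x ≠ x) {γ : L} (hγK : γ ∈ K)
    (hσγ : σ γ = γ) : γ ∈ (⊥ : IntermediateField k L) := by
  have : FiniteDimensional k K := Module.finite_of_finrank_pos hK.pos
  have hle : k⟮γ⟯ ≤ K := adjoin_simple_le_iff.mpr hγK
  rcases hK.eq_one_or_self_of_dvd _ (finrank_dvd_of_le_right hle) with hbot | htop
  · rwa [IntermediateField.finrank_eq_one_iff, adjoin_simple_eq_bot_iff] at hbot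
  · have hint : IsIntegral k γ := (IsIntegral.of_finite k (⟨γ, hγK⟩ : K)).map K.val
    rw [← eq_of_le_of_finrank_eq hle htop] at hxK
    exact absurd (apply_eq_self_of_mem_adjoin_simple hint hσγ hxK) hσx

theorem adjoin_simple_eq_of_eq_mul_add {a : k} (ha : a ≠ 0) (b : k) {α β : L}
    (h : β = algebraMap k L a * α + algebraMap k L b) : k⟮α⟯ = k⟮β⟯ := by
  have hα : α = algebraMap k L a⁻¹ * (β - algebraMap k L b) := by
    rw [h, map_inv₀, add_sub_cancel_right, inv_mul_cancel_left₀ ((map_ne_zero _).mpr ha)]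
  apply le_antisymm <;> rw [adjoin_simple_le_iff]
  · rw [hα]
    exact mul_mem (k⟮β⟯.algebraMap_mem _)
      (sub_mem (mem_adjoin_simple_self k β) (k⟮β⟯.algebraMap_mem _))
  · rw [h]
    exact add_mem (mul_mem (k⟮α⟯.algebraMap_mem _) (mem_adjoin_simple_self k α))
      (k⟮α⟯.algebraMap_mem _)

end AdjoinSimple

section ArtinSchreierRoots

open Polynomial IntermediateField Module

variable {p : ℕ} [Fact p.Prime] {k L : Type*} [Field k] [Field L] [CharP L p] [Algebra k L]
  [Normal k L] {D : k} {α : L}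

theorem minpoly_eq_X_pow_sub_X_sub_C (hD : ¬∃ y : k, y ^ p - y = D)
    (hα : α ^ p - α = algebraMap k L D) : minpoly k α = X ^ p - X - C D := by
  have hp : 1 < p := (Fact.out : p.Prime).one_lt
  have hf : aeval α (X ^ p - X - C D) = 0 := by simp [hα]
  have hint : IsIntegral k α := Algebra.IsIntegral.isIntegral α
  have hdvd := minpoly.dvd k α hf
  refine (eq_of_monic_of_dvd_of_natDegree_le (minpoly.monic hint)
    (monic_X_pow_sub_X_sub_C hp D) hdvd ?_).symm
  rw [natDegree_X_pow_sub_X_sub_C hp]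
  by_contra! hlt
  have hroots : ∀ r ∈ (minpoly k α).aroots L, r - α ∈ (algebraMap k L).range := by
    intro r hr
    have hr : aeval r (X ^ p - X - C D) = 0 := by
      obtain ⟨q, hq⟩ := hdvd
      rw [hq, map_mul, (mem_aroots.mp hr).2, zero_mul]
    obtain ⟨n, rfl⟩ := exists_eq_add_natCast_of_pow_sub_self_eq (p := p) (x := α) (y := r)
      (by simp only [map_sub, map_pow, aeval_X, aeval_C, sub_eq_zero] at hr; rw [hr, hα])
    exact ⟨n, by simp⟩
  obtain ⟨y, hy⟩ :=
    natCast_natDegree_mul_mem_range (minpoly.monic hint) (Normal.splits ‹_› α) hroots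
  have hd : ((minpoly k α).natDegree : L) ≠ 0 := by
    rw [Ne, CharP.cast_eq_zero_iff L p]
    exact Nat.not_dvd_of_pos_of_lt (minpoly.natDegree_pos hint) hlt
  have hyα : algebraMap k L (y / (minpoly k α).natDegree) = α := by
    rw [map_div₀, hy, map_natCast, mul_div_cancel_left₀ _ hd]
  exact hD ⟨_, (algebraMap k L).injective (by rw [map_sub, map_pow, hyα, hα])⟩

theorem exists_algEquiv_apply_eq_add_one (hD : ¬∃ y : k, y ^ p - y = D)
    (hα : α ^ p - α = algebraMap k L D) : ∃ σ : L ≃ₐ[k] L, σ α = α + 1 := by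
  have hα1 : (α + 1) ^ p - (α + 1) = algebraMap k L D := by
    rw [add_pow_char, one_pow, ← hα]
    ring
  exact (Normal.minpoly_eq_iff_mem_orbit L).mp
    (by rw [minpoly_eq_X_pow_sub_X_sub_C hD hα1, minpoly_eq_X_pow_sub_X_sub_C hD hα])

theorem exists_eq_natCast_mul_add_of_mem_adjoin_simple (hD : ¬∃ y : k, y ^ p - y = D)
    (hα : α ^ p - α = algebraMap k L D) {D' : k} {β : L} (hβ : β ^ p - β = algebraMap k L D')
    (hβα : β ∈ k⟮α⟯) : ∃ c : ℕ, ∃ B : k, β = c * α + algebraMap k L B := by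
  obtain ⟨σ, hσ⟩ := exists_algEquiv_apply_eq_add_one hD hα
  obtain ⟨c, hc⟩ : ∃ c : ℕ, σ β = β + c := exists_eq_add_natCast_of_pow_sub_self_eq
    (by rw [← map_pow, ← map_sub, hβ, AlgEquiv.commutes])
  have hfinrank : finrank k k⟮α⟯ = p := by
    rw [adjoin.finrank (Algebra.IsIntegral.isIntegral α), minpoly_eq_X_pow_sub_X_sub_C hD hα,
      natDegree_X_pow_sub_X_sub_C (Fact.out : p.Prime).one_lt]
  have hγ : β - c * α ∈ (⊥ : IntermediateField k L) :=
    mem_bot_of_apply_eq_self (hfinrank ▸ Fact.out) (mem_adjoin_simple_self k α)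
      (by rw [hσ]; simp)
      (sub_mem hβα (mul_mem (k⟮α⟯.natCast_mem c) (mem_adjoin_simple_self k α)))
      (by rw [map_sub, map_mul, map_natCast, hσ, hc]; ring)
  obtain ⟨B, hB⟩ := mem_bot.mp hγ
  exact ⟨c, B, by rw [hB]; ring⟩

end ArtinSchreierRoots

/-- Two Artin-Schreier extensions `k(α)` and `k(β)` (inside a fixed algebraic
closure), with `α^p - α = D` and `β^p - β = D'`, coincide iff there are
`x ∈ 𝔽_p^*` and `B ∈ k` with `D' = x·D + (B^p - B)`. -/
theorem artin_schreier_equal_iff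
    (p : ℕ) (hp : p.Prime) (k : Type*) [Field k] [CharP k p]
    (D D' : k) (hD : ¬∃ y : k, y ^ p - y = D) (hD' : ¬∃ y : k, y ^ p - y = D')
    (α β : AlgebraicClosure k)
    (hα : α ^ p - α = algebraMap k (AlgebraicClosure k) D)
    (hβ : β ^ p - β = algebraMap k (AlgebraicClosure k) D') :
    IntermediateField.adjoin k {α} = IntermediateField.adjoin k {β} ↔
      ∃ x : ZMod p, x ≠ 0 ∧ ∃ B : k, D' = (x.val : k) * D + (B ^ p - B) := by
  have := Fact.mk hp
  constructor
  · intro h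
    obtain ⟨c, B, hc⟩ := exists_eq_natCast_mul_add_of_mem_adjoin_simple hD hα hβ
      (h ▸ IntermediateField.mem_adjoin_simple_self k β)
    have hD'c : D' = c * D + (B ^ p - B) := (algebraMap k _).injective (by
      rw [← hβ, hc, natCast_mul_add_algebraMap_pow_char_sub hα])
    refine ⟨c, fun hc0 => hD' ⟨B, ?_⟩, B, by rwa [ZMod.natCast_val, ZMod.cast_natCast']⟩
    rw [ZMod.natCast_eq_zero_iff, ← CharP.cast_eq_zero_iff k p] at hc0
    rw [hD'c, hc0, zero_mul, zero_add]
  · rintro ⟨x, hx, B, hD'x⟩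
    obtain ⟨n, hn⟩ := exists_eq_add_natCast_of_pow_sub_self_eq (p := p)
      (x := x.val * α + algebraMap k _ B) (y := β)
      (by rw [hβ, natCast_mul_add_algebraMap_pow_char_sub hα, hD'x])
    refine adjoin_simple_eq_of_eq_mul_add (a := (x.val : k)) (b := B + n) ?_
      (by rw [hn, map_add, map_natCast, map_natCast]; ring)
    rwa [Ne, CharP.cast_eq_zero_iff k p, ← ZMod.natCast_eq_zero_iff, ZMod.natCast_zmod_val]
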